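/- arXiv:1908.08226 — 10 statements merged into one kernel-verified Lean document; each statement's English description precedes it below -/
import Mathlib

section
/- Let G be a finite group with trivial center such that there exists a natural number m with |C_G(x)| = m for every non-identity element x of G. Then G is the trivial group. -/
/-!
Every prime power `p ^ k` dividing `|G|` is the order of a subgroup `H`, and a nontrivial
`p`-group has nontrivial center, so `H` centralizes some `z ≠ 1`; hence `p ^ k ∣ |C_G(z)| = m`.
Thus `|G| ∣ m`, so the centralizer of any `x ≠ 1` is all of `G` and `x` is central.
-/

open Subgroup

section

variable {G : Type*} [Group G]

theorem Subgroup.exists_ne_one_le_centralizer (H : Subgroup G) [Nontrivial (center H)] :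
    ∃ z : G, z ≠ 1 ∧ H ≤ centralizer {z} := by
  obtain ⟨z, hz⟩ := exists_ne (1 : center H)
  refine ⟨z, fun h ↦ hz (Subtype.ext (Subtype.ext h)), fun g hg ↦ ?_⟩
  rw [mem_centralizer_singleton_iff]
  exact congrArg Subtype.val (mem_center_iff.mp z.2 ⟨g, hg⟩)

theorem exists_ne_one_prime_pow_dvd_card_centralizer [Finite G] {p k : ℕ} (hp : p.Prime)
    (hk : k ≠ 0) (hpk : p ^ k ∣ Nat.card G) :
    ∃ z : G, z ≠ 1 ∧ p ^ k ∣ Nat.card (centralizer {z}) := by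
  have : Fact p.Prime := ⟨hp⟩
  obtain ⟨H, hH⟩ := Sylow.exists_subgroup_card_pow_prime p hpk
  have hHp : IsPGroup p H := IsPGroup.of_card hH
  have : Nontrivial H := hHp.nontrivial_iff_card.mpr ⟨k, Nat.pos_of_ne_zero hk, hH⟩
  have : Nontrivial (center H) := hHp.center_nontrivial
  obtain ⟨z, hz, hHz⟩ := H.exists_ne_one_le_centralizer
  exact ⟨z, hz, hH ▸ card_dvd_of_le hHz⟩

theorem card_dvd_of_forall_card_centralizer_eq [Finite G] {m : ℕ}
    (h : ∀ x : G, x ≠ 1 → Nat.card (centralizer {x}) = m) : Nat.card G ∣ m := by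
  refine (Nat.dvd_iff_prime_pow_dvd_dvd _ _).mpr fun p k hp hpk ↦ ?_
  rcases eq_or_ne k 0 with rfl | hk
  · simp
  obtain ⟨z, hz, hdvd⟩ := exists_ne_one_prime_pow_dvd_card_centralizer hp hk hpk
  exact h z hz ▸ hdvd

end

/-- If a finite group `G` has trivial center and all centralizers of non-identity
elements have the same size `m`, then `G` is trivial. -/
theorem trivial_of_constant_centralizer_size (G : Type*) [Group G] [Fintype G]
    (hZ : Subgroup.center G = ⊥) (m : ℕ)
    (h : ∀ x : G, x ≠ 1 → Nat.card (Subgroup.centralizer ({x} : Set G)) = m) :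
    ∀ x : G, x = 1 := by
  intro x
  by_contra hx
  have hcard : Nat.card (centralizer {x}) = Nat.card G :=
    Nat.dvd_antisymm (card_subgroup_dvd_card _) (h x hx ▸ card_dvd_of_forall_card_centralizer_eq h)
  have hxZ : x ∈ center G :=
    centralizer_eq_top_iff_subset.mp (eq_top_of_card_eq _ hcard) rfl
  exact hx (by rwa [hZ, mem_bot] at hxZ)
end

section
/- Let G be a finite non-abelian group and k a natural number. If |C_G(x)| < (k+1) + |Z(G)| for every noncentral element x of G, then |Z(G)| ≤ k. -/
namespace Subgroup

variable {G : Type*} [Group G]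

theorem two_mul_card_le_card_of_lt {H K : Subgroup G} [Finite K] (hHK : H < K) :
    2 * Nat.card H ≤ Nat.card K := by
  obtain ⟨m, hm⟩ := card_dvd_of_le hHK.le
  have hm_ne_zero : m ≠ 0 := by
    rintro rfl
    exact Nat.card_pos.ne' (hm.trans (mul_zero _))
  have hm_ne_one : m ≠ 1 := by
    rintro rfl
    exact hHK.ne (eq_of_le_of_card_ge hHK.le (by rw [hm, mul_one]))
  rw [hm, mul_comm]
  exact Nat.mul_le_mul_left _ (show 2 ≤ m by omega)

theorem center_lt_centralizer_singleton {x : G} (hx : x ∉ center G) :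
    center G < centralizer ({x} : Set G) :=
  lt_of_le_of_ne (center_le_centralizer _) fun h ↦
    hx (h ▸ mem_centralizer_singleton_iff.mpr rfl)

end Subgroup

/-- If a finite non-abelian group `G` satisfies `|C_G(x)| < (k+1) + |Z(G)|` for every
noncentral `x` (i.e. `G` is strong `k`-star free), then `|Z(G)| ≤ k`. -/
theorem center_card_le_of_strong_star_free (G : Type*) [Group G] [Fintype G]
    (hna : ¬ ∀ a b : G, a * b = b * a) (k : ℕ)
    (h : ∀ x : G, x ∉ Subgroup.center G →
      Nat.card (Subgroup.centralizer ({x} : Set G)) <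
        (k + 1) + Nat.card (Subgroup.center G)) :
    Nat.card (Subgroup.center G) ≤ k := by
  obtain ⟨a, b, hab⟩ : ∃ a b : G, a * b ≠ b * a := by simpa only [not_forall] using hna
  have ha : a ∉ Subgroup.center G := fun hc ↦ hab (Subgroup.mem_center_iff.mp hc b).symm
  have h_index := Subgroup.two_mul_card_le_card_of_lt (Subgroup.center_lt_centralizer_singleton ha)
  have h_star := h a ha
  omega
end

section
/- For every natural number k there exists a natural number N such that every finite non-abelian group G satisfying |C_G(x)| < (k+1) + |Z(G)| for all noncentral x in G has |G| ≤ N. In particular, up to isomorphism there are only finitely many finite non-abelian groups whose commuting graph is strong k-star free. -/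
/-!
If `G` is non-abelian and `|C_G(x)| ≤ k + |Z(G)|` for noncentral `x`, then `Z(G)` has index at least
two in each such centralizer, so `|Z(G)| ≤ k` and every noncentral centralizer has order at most
`2k`, hence divides `L = (2k)!`. Multiplying the class equation `|G| = |Z(G)| + ∑ |G| / |C_G(x_i)|`
by `L` makes every summand over a noncentral class a multiple of `|G|`, so `|G| ∣ |Z(G)| * L`, and
`|G| ≤ k * (2k)!`.
-/

open Subgroup ConjClasses

theorem Subgroup.two_mul_card_center_le_card_centralizer {G : Type*} [Group G] [Finite G]
    {x : G} (hx : x ∉ center G) :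
    2 * Nat.card (center G) ≤ Nat.card (centralizer ({x} : Set G)) := by
  have hle := center_le_centralizer ({x} : Set G)
  by_contra! hlt
  have hcard : Nat.card (centralizer ({x} : Set G)) = Nat.card (center G) :=
    Nat.eq_of_dvd_of_lt_two_mul Nat.card_pos.ne' (card_dvd_of_le hle) hlt
  exact hx <| eq_of_le_of_card_ge hle hcard.le ▸ mem_centralizer_singleton_iff.mpr rfl

theorem ConjClasses.card_carrier_mul_card_centralizer {G : Type*} [Group G] (g : G) :
    Nat.card (ConjClasses.mk g).carrier * Nat.card (centralizer ({g} : Set G)) = Nat.card G := by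
  rw [nat_card_centralizer_nat_card_stabilizer, ← ConjAct.orbit_eq_carrier_conjClasses,
    Nat.card_coe_set_eq, ← MulAction.index_stabilizer, mul_comm, card_mul_index]
  exact Nat.card_congr ConjAct.toConjAct.toEquiv.symm

theorem ConjClasses.exists_eq_mk_of_mem_noncenter {G : Type*} [Group G] {c : ConjClasses G}
    (hc : c ∈ noncenter G) : ∃ g ∉ center G, ConjClasses.mk g = c := by
  obtain ⟨g, rfl⟩ := c.exists_rep
  exact ⟨g, fun hg => (mk_bijOn G).mapsTo hg hc, rfl⟩

theorem Group.card_dvd_card_center_mul {G : Type*} [Group G] [Finite G] {L : ℕ}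
    (hL : ∀ x ∉ center G, Nat.card (centralizer ({x} : Set G)) ∣ L) :
    Nat.card G ∣ Nat.card (center G) * L := by
  have hclass : Nat.card G ∣ ∑ᶠ c ∈ noncenter G, Nat.card c.carrier * L :=
    finsum_mem_induction _ (dvd_zero _) (fun _ _ => dvd_add) fun c hc => by
      obtain ⟨g, hg, rfl⟩ := exists_eq_mk_of_mem_noncenter hc
      obtain ⟨t, rfl⟩ := hL g hg
      exact ⟨t, by rw [← mul_assoc, card_carrier_mul_card_centralizer]⟩
  rw [← finsum_mem_mul' _ _ (Set.toFinite _)] at hclass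
  rw [Nat.dvd_add_iff_left hclass, ← add_mul, Group.nat_card_center_add_sum_card_noncenter_eq_card]
  exact dvd_mul_right _ _

/-- For every `k` there is a bound `N` such that every finite non-abelian group that is
strong `k`-star free (i.e. `|C_G(x)| < (k+1) + |Z(G)|` for all noncentral `x`) has order
at most `N`.  In particular, up to isomorphism there are only finitely many finite
non-abelian groups whose commuting graph is strong `k`-star free. -/
theorem strong_star_free_groups_bounded (k : ℕ) :
    ∃ N : ℕ, ∀ (G : Type) [Group G] [Fintype G],
      (¬ ∀ a b : G, a * b = b * a) →
      (∀ x : G, x ∉ Subgroup.center G →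
        Nat.card (Subgroup.centralizer ({x} : Set G)) <
          (k + 1) + Nat.card (Subgroup.center G)) →
      Nat.card G ≤ N := by
  refine ⟨k * (2 * k).factorial, fun G _ _ hG hfree => ?_⟩
  obtain ⟨a, b, hab⟩ : ∃ a b : G, a * b ≠ b * a := by simpa using hG
  have ha : a ∉ center G := fun h => hab (mem_center_iff.mp h b).symm
  have hcenter : Nat.card (center G) ≤ k := by
    have := two_mul_card_center_le_card_centralizer ha
    have := hfree a ha
    omega
  have hdvd : Nat.card G ∣ Nat.card (center G) * (2 * k).factorial :=
    Group.card_dvd_card_center_mul fun x hx =>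
      Nat.dvd_factorial Nat.card_pos (by have := hfree x hx; omega)
  calc Nat.card G ≤ Nat.card (center G) * (2 * k).factorial :=
        Nat.le_of_dvd (Nat.mul_pos Nat.card_pos (Nat.factorial_pos _)) hdvd
    _ ≤ k * (2 * k).factorial := Nat.mul_le_mul_right _ hcenter
end

section
/- Let G be a nontrivial finite group with trivial center such that for every non-identity element x of G, |C_G(x)| = 2 or |C_G(x)| = 3. Then G is isomorphic to S_3, the symmetric group on 3 symbols. -/
/-!
A nontrivial `p`-subgroup `K` has a nontrivial center, so it lies in the centralizer of some
`z ≠ 1`; hence `|K| ≤ 3`, which forces `|G|` to divide `6`. A group of prime order is abelian,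
so the trivial center gives `|G| = 6`. An element `x` of order `2` generates a subgroup `H` of
index `3`, and `H` has trivial normal core (a normal subgroup of order `2` is central), so the
action of `G` on `G ⧸ H` embeds `G` into `S₃`, which has the same order.
-/

open Subgroup

section

variable {G : Type*} [Group G]

theorem IsPGroup.card_le_of_forall_card_centralizer_le [Finite G] {p c : ℕ} [Fact p.Prime]
    {K : Subgroup G} (hK : IsPGroup p K) [Nontrivial K]
    (hC : ∀ x : G, x ≠ 1 → Nat.card (centralizer {x}) ≤ c) : Nat.card K ≤ c := by
  have := hK.center_nontrivial
  obtain ⟨⟨⟨z, hzK⟩, hz⟩, hz_ne⟩ := exists_ne (1 : center K)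
  have hz1 : z ≠ 1 := fun h => hz_ne (by ext; simpa using h)
  have hle : K ≤ centralizer {z} := fun g hg => by
    rw [mem_centralizer_singleton_iff]
    simpa [Subtype.ext_iff] using mem_center_iff.mp hz ⟨g, hg⟩
  exact (card_le_of_le hle).trans (hC z hz1)

theorem card_dvd_six_of_forall_card_centralizer_le_three [Finite G]
    (hC : ∀ x : G, x ≠ 1 → Nat.card (centralizer {x}) ≤ 3) : Nat.card G ∣ 6 := by
  rw [Nat.dvd_iff_prime_pow_dvd_dvd]
  intro p k hp hdvd
  rcases Nat.eq_zero_or_pos k with rfl | hk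
  · exact one_dvd 6
  have := Fact.mk hp
  obtain ⟨K, hK⟩ := Sylow.exists_subgroup_card_pow_prime p hdvd
  have : Nontrivial K := Finite.one_lt_card_iff_nontrivial.mp
    (hK ▸ Nat.one_lt_pow hk.ne' hp.one_lt)
  have hle : p ^ k ≤ 3 := hK ▸ (IsPGroup.of_card hK).card_le_of_forall_card_centralizer_le hC
  have hpos : 0 < p ^ k := pow_pos hp.pos k
  interval_cases p ^ k <;> norm_num

theorem not_prime_card_of_center_eq_bot [Nontrivial G] (hZ : center G = ⊥) :
    ¬ (Nat.card G).Prime := by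
  intro hp
  have := Fact.mk hp
  have := isCyclic_of_prime_card (α := G) rfl
  rw [center_eq_top, eq_bot_iff_forall] at hZ
  obtain ⟨x, hx⟩ := exists_ne (1 : G)
  exact hx (hZ x (mem_top x))

theorem card_eq_six_of_forall_card_centralizer_le_three [Finite G] [Nontrivial G]
    (hZ : center G = ⊥) (hC : ∀ x : G, x ≠ 1 → Nat.card (centralizer {x}) ≤ 3) :
    Nat.card G = 6 := by
  have hdvd := card_dvd_six_of_forall_card_centralizer_le_three hC
  have hnp := not_prime_card_of_center_eq_bot hZ
  have h1 : 1 < Nat.card G := Finite.one_lt_card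
  have h6 : Nat.card G ≤ 6 := Nat.le_of_dvd (by norm_num) hdvd
  interval_cases h : Nat.card G
  exacts [absurd Nat.prime_two hnp, absurd Nat.prime_three hnp, by norm_num at hdvd,
    by norm_num at hdvd, rfl]

theorem Subgroup.Normal.le_center_of_card_eq_two {N : Subgroup G} (hN : N.Normal)
    (hcard : Nat.card N = 2) : N ≤ center G := by
  obtain ⟨y, -, hy⟩ := (Nat.card_eq_two_iff' (1 : N)).mp hcard
  intro n hn
  rw [mem_center_iff]
  intro g
  by_cases hn1 : n = 1
  · simp [hn1]
  have hconj : g * n * g⁻¹ ≠ 1 := by simpa [mul_inv_eq_one] using hn1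
  have heq : (⟨g * n * g⁻¹, hN.conj_mem n hn g⟩ : N) = ⟨n, hn⟩ :=
    (hy _ (by simpa [Subtype.ext_iff] using hconj)).trans
      (hy _ (by simpa [Subtype.ext_iff] using hn1)).symm
  exact mul_inv_eq_iff_eq_mul.mp (congrArg Subtype.val heq)

theorem normalCore_eq_bot_of_card_eq_two (hZ : center G = ⊥) {H : Subgroup G}
    (hH : Nat.card H = 2) : H.normalCore = ⊥ := by
  rw [← card_eq_one]
  have hdvd : Nat.card H.normalCore ∣ 2 := hH ▸ card_dvd_of_le H.normalCore_le
  rcases (Nat.dvd_prime Nat.prime_two).mp hdvd with h1 | h2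
  · exact h1
  · have hle : H.normalCore ≤ ⊥ := hZ ▸ (normalCore_normal H).le_center_of_card_eq_two h2
    rw [le_bot_iff.mp hle, card_bot] at h2
    omega

theorem nonempty_mulEquiv_perm_of_normalCore_eq_bot [Finite G] {H : Subgroup G} {n : ℕ}
    (hH : H.normalCore = ⊥) (hindex : Nat.card (G ⧸ H) = n) (hG : Nat.card G = n.factorial) :
    Nonempty (G ≃* Equiv.Perm (Fin n)) := by
  have hinj : Function.Injective (MulAction.toPermHom G (G ⧸ H)) := by
    rw [← MonoidHom.ker_eq_bot_iff, ← normalCore_eq_ker, hH]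
  let e := (Finite.equivFinOfCardEq hindex).permCongrHom
  let f : G →* Equiv.Perm (Fin n) := e.toMonoidHom.comp (MulAction.toPermHom G (G ⧸ H))
  exact ⟨MulEquiv.ofBijective f ((Nat.bijective_iff_injective_and_card f).mpr
    ⟨e.injective.comp hinj, by simp [hG, Fintype.card_perm]⟩)⟩

end

/-- A nontrivial finite group with trivial center in which every non-identity element
has centralizer of order `2` or `3` is isomorphic to `S₃`. -/
theorem iso_symmGroup3_of_centralizers (G : Type*) [Group G] [Fintype G]
    (hnt : ∃ x : G, x ≠ 1) (hZ : Subgroup.center G = ⊥)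
    (h : ∀ x : G, x ≠ 1 →
      Nat.card (Subgroup.centralizer ({x} : Set G)) = 2 ∨
      Nat.card (Subgroup.centralizer ({x} : Set G)) = 3) :
    Nonempty (G ≃* Equiv.Perm (Fin 3)) := by
  obtain ⟨x0, hx0⟩ := hnt
  have : Nontrivial G := ⟨x0, 1, hx0⟩
  have hsix : Nat.card G = 6 := card_eq_six_of_forall_card_centralizer_le_three hZ fun x hx => by
    rcases h x hx with h' | h' <;> omega
  have := Fact.mk Nat.prime_two
  obtain ⟨x, hx⟩ := exists_prime_orderOf_dvd_card' (G := G) 2 (by rw [hsix]; norm_num)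
  have hH : Nat.card (zpowers x) = 2 := by rw [Nat.card_zpowers, hx]
  have hindex : Nat.card (G ⧸ zpowers x) = 3 := by
    have := card_eq_card_quotient_mul_card_subgroup (zpowers x)
    rw [hsix, hH] at this
    omega
  exact nonempty_mulEquiv_perm_of_normalCore_eq_bot (normalCore_eq_bot_of_card_eq_two hZ hH)
    hindex hsix
end

section
/- Let G be a nontrivial finite group with trivial center such that for every non-identity element x of G, |C_G(x)| = 2 or |C_G(x)| = 5. Then G is isomorphic to D_{10}, the dihedral group of order 10. -/
/-!
A nontrivial `p`-subgroup centralizes any non-identity element of its own center, so its order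
divides `2` or `5`; hence `|G|` divides `10`, and `|G| = 10` since groups of prime order have
nontrivial center. Take `a` of order `5` and `b` of order `2`. Then `⟨a⟩` has index `2`, so it is
normal, and `C(b)` has order `2`, so it meets `⟨a⟩` trivially. For `c = b a b⁻¹ ∈ ⟨a⟩`,
conjugation by `b` swaps `a` and `c`, hence fixes `a c ∈ ⟨a⟩`; so `a c = 1`, i.e. `b a b⁻¹ = a⁻¹`,
and `a`, `b` satisfy the defining relations of `D₁₀`.
-/

open Subgroup

section Centralizers

variable {G : Type*} [Group G]

theorem card_dvd_of_forall_card_centralizer_dvd [Finite G] {m : ℕ}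
    (hm : ∀ x : G, x ≠ 1 → Nat.card (centralizer {x}) ∣ m) : Nat.card G ∣ m := by
  refine (Nat.dvd_iff_prime_pow_dvd_dvd _ _).mpr fun p k hp hpk => ?_
  rcases Nat.eq_zero_or_pos k with rfl | hk
  · exact (pow_zero p).symm ▸ one_dvd m
  have := Fact.mk hp
  obtain ⟨H, hH⟩ := Sylow.exists_subgroup_card_pow_prime p hpk
  have : Nontrivial H := by
    rw [← Finite.one_lt_card_iff_nontrivial, hH]
    exact Nat.one_lt_pow hk.ne' hp.one_lt
  have := (IsPGroup.of_card hH).center_nontrivial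
  obtain ⟨⟨⟨z, hzH⟩, hz⟩, hz_ne⟩ := exists_ne (1 : center H)
  have hle : H ≤ centralizer {z} := fun g hg =>
    mem_centralizer_singleton_iff.mpr (congrArg Subtype.val (mem_center_iff.mp hz ⟨g, hg⟩))
  have hz1 : z ≠ 1 := fun h => hz_ne (by ext; exact h)
  exact hH ▸ (card_dvd_of_le hle).trans (hm z hz1)

theorem conj_eq_inv_of_disjoint_zpowers_centralizer {a b : G} (hb : b ^ 2 = 1)
    (hconj : b * a * b⁻¹ ∈ zpowers a) (hdisj : Disjoint (zpowers a) (centralizer {b})) :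
    b * a * b⁻¹ = a⁻¹ := by
  set c := b * a * b⁻¹ with hc
  have hbb : b * b = 1 := by rw [← sq, hb]
  have hac : Commute a c := by
    obtain ⟨k, hk⟩ := mem_zpowers_iff.mp hconj
    exact hk ▸ (Commute.refl a).zpow_right k
  have hcent : a * c ∈ centralizer {b} := by
    rw [mem_centralizer_singleton_iff]
    calc a * c * b = b * (c * a) := by
          simp only [hc, mul_assoc, inv_eq_of_mul_eq_one_right hbb, hbb, mul_one]
          rw [← mul_assoc b b, hbb, one_mul]
      _ = b * (a * c) := by rw [hac.eq]
  exact eq_inv_of_mul_eq_one_right (disjoint_def.mp hdisj (mul_mem (mem_zpowers a) hconj) hcent)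

end Centralizers

namespace DihedralGroup

variable {G : Type*} [Group G] {n : ℕ} [NeZero n] {a b : G}

theorem pow_val_add (ha : orderOf a = n) (i j : ZMod n) :
    a ^ (i + j).val = a ^ i.val * a ^ j.val := by
  simp only [ZMod.val_add, ← ha, pow_mod_orderOf, pow_add]

theorem pow_val_sub (ha : orderOf a = n) (i j : ZMod n) :
    a ^ (j - i).val = (a ^ i.val)⁻¹ * a ^ j.val := by
  rw [eq_inv_mul_iff_mul_eq, ← pow_val_add ha, add_sub_cancel]

noncomputable def lift (ha : orderOf a = n) (hb : b ^ 2 = 1) (hba : b * a * b⁻¹ = a⁻¹) :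
    DihedralGroup n →* G :=
  have hbb : b * b = 1 := by rw [← sq, hb]
  have hpow_mul (i : ZMod n) : a ^ i.val * b = b * (a ^ i.val)⁻¹ :=
    calc a ^ i.val * b = b * (b * a ^ i.val * b⁻¹) := by
          simp only [inv_eq_of_mul_eq_one_right hbb, ← mul_assoc, hbb, one_mul]
      _ = b * (a ^ i.val)⁻¹ := by rw [← conj_pow, hba, inv_pow]
  MonoidHom.mk' (fun
      | r i => a ^ i.val
      | sr i => b * a ^ i.val) <| by
    rintro (i | i) (j | j)
    · exact pow_val_add ha i j
    · show b * a ^ (j - i).val = a ^ i.val * (b * a ^ j.val)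
      rw [← mul_assoc, hpow_mul, mul_assoc, pow_val_sub ha]
    · show b * a ^ (i + j).val = b * a ^ i.val * a ^ j.val
      rw [pow_val_add ha, mul_assoc]
    · show a ^ (j - i).val = b * a ^ i.val * (b * a ^ j.val)
      rw [mul_assoc, ← mul_assoc _ b, hpow_mul, mul_assoc, ← mul_assoc b b, hbb, one_mul,
        pow_val_sub ha]

theorem lift_injective (ha : orderOf a = n) (hb : b ^ 2 = 1) (hba : b * a * b⁻¹ = a⁻¹)
    (hb_not_mem : b ∉ zpowers a) : Function.Injective (lift ha hb hba) := by
  rw [injective_iff_map_eq_one]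
  rintro (i | i) hi
  · have hdvd : orderOf a ∣ i.val := orderOf_dvd_of_pow_eq_one hi
    rw [ha] at hdvd
    rw [(ZMod.val_eq_zero i).mp (Nat.eq_zero_of_dvd_of_lt hdvd (ZMod.val_lt i)), r_zero]
  · exact (hb_not_mem (eq_inv_of_mul_eq_one_left hi ▸ inv_mem (npow_mem_zpowers a i.val))).elim

theorem lift_bijective [Finite G] (ha : orderOf a = n) (hb : b ^ 2 = 1) (hba : b * a * b⁻¹ = a⁻¹)
    (hb_not_mem : b ∉ zpowers a) (hcard : Nat.card G = 2 * n) :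
    Function.Bijective (lift ha hb hba) :=
  (Nat.bijective_iff_injective_and_card _).mpr
    ⟨lift_injective ha hb hba hb_not_mem, by rw [nat_card, hcard]⟩

end DihedralGroup

section CentralizersOfOrderTwoOrFive

variable {G : Type*} [Group G] [Finite G]

theorem card_eq_ten_of_card_centralizer [Nontrivial G]
    (h : ∀ x : G, x ≠ 1 →
      Nat.card (centralizer ({x} : Set G)) = 2 ∨ Nat.card (centralizer ({x} : Set G)) = 5)
    (hZ : center G = ⊥) : Nat.card G = 10 := by
  have hdvd : Nat.card G ∣ 10 := card_dvd_of_forall_card_centralizer_dvd fun x hx => by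
    rcases h x hx with hc | hc <;> rw [hc] <;> norm_num
  have hne_prime (p : ℕ) (hp : p.Prime) : Nat.card G ≠ p := fun hGp => by
    have := Fact.mk hp
    exact (IsPGroup.of_card (n := 1) (by rw [hGp, pow_one])).bot_lt_center.ne' hZ
  have hne_one : Nat.card G ≠ 1 := Finite.one_lt_card.ne'
  have := hne_prime 2 Nat.prime_two
  have := hne_prime 5 Nat.prime_five
  have := Nat.le_of_dvd (by norm_num) hdvd
  interval_cases hG : Nat.card G <;> omega

theorem exists_dihedral_generators_of_card_eq_ten
    (h : ∀ x : G, x ≠ 1 →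
      Nat.card (centralizer ({x} : Set G)) = 2 ∨ Nat.card (centralizer ({x} : Set G)) = 5)
    (hcard : Nat.card G = 10) :
    ∃ a b : G, orderOf a = 5 ∧ b ^ 2 = 1 ∧ b * a * b⁻¹ = a⁻¹ ∧ b ∉ zpowers a := by
  have := Fact.mk Nat.prime_five
  have := Fact.mk Nat.prime_two
  obtain ⟨a, ha⟩ := exists_prime_orderOf_dvd_card' (G := G) 5 (by rw [hcard]; norm_num)
  obtain ⟨b, hb⟩ := exists_prime_orderOf_dvd_card' (G := G) 2 (by rw [hcard]; norm_num)
  have hb1 : b ≠ 1 := fun hb1 => by simp [hb1] at hb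
  have hCb : Nat.card (centralizer {b}) = 2 := by
    have := (centralizer {b}).orderOf_dvd_natCard (mem_centralizer_singleton_iff.mpr rfl)
    refine (h b hb1).resolve_right fun hc => ?_
    rw [hc, hb] at this
    norm_num at this
  have hdisj : Disjoint (zpowers a) (centralizer {b}) :=
    disjoint_of_coprime_natCard (by rw [Nat.card_zpowers, ha, hCb]; norm_num)
  have hnormal : (zpowers a).Normal := normal_of_index_eq_two <| by
    have := card_mul_index (zpowers a)
    rw [Nat.card_zpowers, ha, hcard] at this
    omega
  have hb2 : b ^ 2 = 1 := hb ▸ pow_orderOf_eq_one b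
  refine ⟨a, b, ha, hb2, conj_eq_inv_of_disjoint_zpowers_centralizer hb2
    (hnormal.conj_mem a (mem_zpowers a) b) hdisj,
    fun hb_mem => hb1 (disjoint_def.mp hdisj hb_mem (mem_centralizer_singleton_iff.mpr rfl))⟩

end CentralizersOfOrderTwoOrFive

/-- A nontrivial finite group with trivial center in which every non-identity element
has centralizer of order `2` or `5` is isomorphic to the dihedral group `D₁₀`. -/
theorem iso_dihedral10_of_centralizers (G : Type*) [Group G] [Fintype G]
    (hnt : ∃ x : G, x ≠ 1) (hZ : Subgroup.center G = ⊥)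
    (h : ∀ x : G, x ≠ 1 →
      Nat.card (Subgroup.centralizer ({x} : Set G)) = 2 ∨
      Nat.card (Subgroup.centralizer ({x} : Set G)) = 5) :
    Nonempty (G ≃* DihedralGroup 5) := by
  obtain ⟨x, hx⟩ := hnt
  have := nontrivial_of_ne x 1 hx
  have hcard := card_eq_ten_of_card_centralizer h hZ
  obtain ⟨a, b, ha, hb, hba, hb_not_mem⟩ := exists_dihedral_generators_of_card_eq_ten h hcard
  exact ⟨(MulEquiv.ofBijective _ (DihedralGroup.lift_bijective ha hb hba hb_not_mem hcard)).symm⟩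
end

section
/- Let G be a nontrivial finite group with trivial center such that for every non-identity element x of G, |C_G(x)| = 4 or |C_G(x)| = 5. Then G is isomorphic to GA(1,5), the general affine group of degree 1 over the field with 5 elements. -/
/-!
An element lies in its own centralizer, so its order divides 4 or 5. A nontrivial Sylow subgroup
centralizes any nontrivial element of its centre, so its order divides 4 or 5, and `|G| ∣ 20`.
A group with trivial centre is not a `p`-group, so elements with centralizers of both orders
exist and `|G| = 20`. For `u` of order 5, `N = ⟨u⟩` is self-centralizing and is the unique Sylow
5-subgroup; a centralizer `K` of order 4 is a complement of `N`, and conjugation embeds `K` into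
`Aut N ≅ (ZMod 5)ˣ`, which also has order 4. Hence `G ≅ N ⋊ Aut N`, the holomorph of the cyclic
group of order 5, which is the affine group of `ZMod 5`.
-/

open Subgroup

section
variable {G : Type*} [Group G]

theorem pow_card_centralizer_singleton_eq_one (x : G) :
    x ^ Nat.card (centralizer ({x} : Set G)) = 1 :=
  congrArg Subtype.val
    (pow_card_eq_one' (x := (⟨x, mem_centralizer_singleton_iff.mpr rfl⟩ : centralizer {x})))

theorem IsPGroup.exists_ne_one_le_centralizer {p : ℕ} [Fact p.Prime] {H : Subgroup G} [Finite H]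
    (hH : IsPGroup p H) (hbot : H ≠ ⊥) : ∃ x : G, x ≠ 1 ∧ H ≤ centralizer {x} := by
  have := H.nontrivial_iff_ne_bot.mpr hbot
  have := hH.center_nontrivial
  obtain ⟨z, hz⟩ := exists_ne (1 : center H)
  refine ⟨(z : H), by simpa using hz, fun g hg ↦ mem_centralizer_singleton_iff.mpr ?_⟩
  exact congrArg Subtype.val (mem_center_iff.mp z.2 ⟨g, hg⟩)

theorem card_dvd_of_forall_sylow_card_dvd [Finite G] {m : ℕ} (hm : m ≠ 0)
    (h : ∀ (p : ℕ) [Fact p.Prime] (P : Sylow p G), Nat.card P ∣ m) : Nat.card G ∣ m := by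
  rw [← Nat.factorization_prime_le_iff_dvd Nat.card_pos.ne' hm]
  intro p hp
  have := Fact.mk hp
  obtain ⟨P⟩ : Nonempty (Sylow p G) := inferInstance
  have hP := h p P
  rw [P.card_eq_multiplicity] at hP
  exact (hp.pow_dvd_iff_le_factorization hm).mp hP

theorem exists_pow_ne_one_of_center_eq_bot [Finite G] [Nontrivial G] (hZ : center G = ⊥)
    (p : ℕ) [Fact p.Prime] (k : ℕ) : ∃ x : G, x ^ p ^ k ≠ 1 := by
  by_contra! hpow
  have hZnt := IsPGroup.center_nontrivial (p := p) (G := G) fun g ↦ ⟨k, hpow g⟩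
  rw [hZ, nontrivial_iff_ne_bot] at hZnt
  exact hZnt rfl

theorem Subgroup.normal_of_isPGroup_of_index_lt [Finite G] {p : ℕ} [Fact p.Prime]
    {H : Subgroup G} (hH : IsPGroup p H) (hidx : H.index < p) : H.Normal := by
  have hpos : 0 < H.index := Nat.pos_of_ne_zero index_ne_zero_of_finite
  let P := hH.toSylow (Nat.not_dvd_of_pos_of_lt hpos hidx)
  have hlt : Nat.card (Sylow p G) < p :=
    (Nat.le_of_dvd hpos P.card_dvd_index).trans_lt hidx
  have hone : Nat.card (Sylow p G) = 1 := by
    have hmod := card_sylow_modEq_one p G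
    rwa [Nat.ModEq, Nat.mod_eq_of_lt hlt, Nat.mod_eq_of_lt (Fact.out : p.Prime).one_lt] at hmod
  have := (Nat.card_eq_one_iff_unique.mp hone).1
  exact P.normal_of_subsingleton

end

namespace SemidirectProduct
variable {N M : Type*} [Group N] [Group M]

def holomorphCongr (e : N ≃* M) :
    N ⋊[MonoidHom.id _] MulAut N ≃* M ⋊[MonoidHom.id _] MulAut M :=
  congr e (MulAut.congr e) fun _ ↦ by ext; simp

end SemidirectProduct

namespace Subgroup.IsComplement'
variable {G : Type*} [Group G] {N K : Subgroup G} [N.Normal] [Finite N]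

theorem bijective_conj (hc : N.IsComplement' K) (hC : centralizer (N : Set G) ≤ N)
    (hK : Nat.card (MulAut N) ≤ Nat.card K) :
    Function.Bijective
      (N.normalizerMonoidHom.comp
        (inclusion (N.normalizer_eq_top ▸ le_top : K ≤ normalizer N))) := by
  refine Function.Injective.bijective_of_nat_card_le ?_ hK
  rw [injective_iff_map_eq_one]
  intro k hk
  have hkC : (k : G) ∈ centralizer (N : Set G) := by
    rw [mem_centralizer_iff]
    intro n hn
    have hconj : (k : G) * n * (k : G)⁻¹ = n := by
      simpa using congrArg Subtype.val (DFunLike.congr_fun hk ⟨n, hn⟩)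
    exact (mul_inv_eq_iff_eq_mul.mp hconj).symm
  exact Subtype.ext (hc.disjoint.le_bot ⟨hC hkC, k.2⟩)

noncomputable def mulEquivHolomorph (hc : N.IsComplement' K) (hC : centralizer (N : Set G) ≤ N)
    (hK : Nat.card (MulAut N) ≤ Nat.card K) : G ≃* N ⋊[MonoidHom.id _] MulAut N :=
  (SemidirectProduct.mulEquivSubgroup hc).symm.trans
    (SemidirectProduct.congr (MulEquiv.refl N) (MulEquiv.ofBijective _ (hc.bijective_conj hC hK))
      fun _ ↦ rfl)

end Subgroup.IsComplement'

namespace ZMod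
variable (n : ℕ)

def affineEquivMulEquivHolomorph :
    (ZMod n ≃ᵃ[ZMod n] ZMod n) ≃*
      Multiplicative (ZMod n) ⋊[MonoidHom.id _] MulAut (Multiplicative (ZMod n)) where
  toFun f := ⟨.ofAdd (f 0), AddEquiv.toMultiplicative f.linear.toAddEquiv⟩
  invFun x :=
    ((AddEquiv.toMultiplicative.symm x.right).toLinearEquiv (ZMod.map_smul _)).toAffineEquiv.trans
      (AffineEquiv.constVAdd _ _ x.left.toAdd)
  left_inv f := by
    ext y
    simpa [add_comm] using (f.map_vadd 0 y).symm
  right_inv x := by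
    ext y
    · simp
    · rfl
  map_mul' f g := by
    ext y
    · simpa [add_comm] using f.map_vadd 0 (g 0)
    · rfl

end ZMod

section CentralizersOfOrderFourOrFive
variable {G : Type*} [Group G] [Finite G]
  (h : ∀ x : G, x ≠ 1 →
    Nat.card (centralizer ({x} : Set G)) = 4 ∨ Nat.card (centralizer ({x} : Set G)) = 5)
include h

theorem card_dvd_twenty : Nat.card G ∣ 20 := by
  refine card_dvd_of_forall_sylow_card_dvd (by norm_num) fun p _ P ↦ ?_
  obtain hbot | hbot := eq_or_ne (P : Subgroup G) ⊥
  · simp [hbot]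
  obtain ⟨x, hx, hPx⟩ := P.2.exists_ne_one_le_centralizer hbot
  refine (card_dvd_of_le hPx).trans ?_
  rcases h x hx with hcard | hcard <;> rw [hcard] <;> norm_num

theorem exists_card_centralizer_eq_five [Nontrivial G] (hZ : center G = ⊥) :
    ∃ x : G, Nat.card (centralizer ({x} : Set G)) = 5 := by
  have : Fact (Nat.Prime 2) := ⟨Nat.prime_two⟩
  obtain ⟨x, hx⟩ := exists_pow_ne_one_of_center_eq_bot hZ 2 2
  refine ⟨x, (h x ?_).resolve_left fun h4 ↦ hx ?_⟩
  · rintro rfl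
    exact hx (one_pow _)
  · simpa [h4] using pow_card_centralizer_singleton_eq_one x

theorem exists_card_centralizer_eq_four [Nontrivial G] (hZ : center G = ⊥) :
    ∃ x : G, Nat.card (centralizer ({x} : Set G)) = 4 := by
  have : Fact (Nat.Prime 5) := ⟨by norm_num⟩
  obtain ⟨x, hx⟩ := exists_pow_ne_one_of_center_eq_bot hZ 5 1
  refine ⟨x, (h x ?_).resolve_right fun h5 ↦ hx ?_⟩
  · rintro rfl
    exact hx (one_pow _)
  · simpa [h5] using pow_card_centralizer_singleton_eq_one x

theorem card_eq_twenty [Nontrivial G] (hZ : center G = ⊥) : Nat.card G = 20 := by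
  obtain ⟨x, hx⟩ := exists_card_centralizer_eq_four h hZ
  obtain ⟨y, hy⟩ := exists_card_centralizer_eq_five h hZ
  have h4 : 4 ∣ Nat.card G := hx ▸ card_subgroup_dvd_card _
  have h5 : 5 ∣ Nat.card G := hy ▸ card_subgroup_dvd_card _
  exact Nat.dvd_antisymm (card_dvd_twenty h)
    (Nat.Coprime.mul_dvd_of_dvd_of_dvd (by norm_num) h4 h5)

theorem centralizer_eq_zpowers_of_orderOf_eq_five {u : G} (hu : orderOf u = 5) :
    centralizer ({u} : Set G) = zpowers u := by
  have hle : zpowers u ≤ centralizer {u} :=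
    zpowers_le.mpr (mem_centralizer_singleton_iff.mpr rfl)
  have h5 : 5 ∣ Nat.card (centralizer ({u} : Set G)) := by
    simpa [Nat.card_zpowers, hu] using card_dvd_of_le hle
  have hu1 : u ≠ 1 := by
    rintro rfl
    simp at hu
  rcases h u hu1 with h4 | h5'
  · rw [h4] at h5
    norm_num at h5
  · exact (eq_of_le_of_card_ge hle (by rw [h5', Nat.card_zpowers, hu])).symm

end CentralizersOfOrderFourOrFive

/-- A nontrivial finite group with trivial center in which every non-identity element
has centralizer of order `4` or `5` is isomorphic to the general affine group
`GA(1,5)`, realized as the group of affine equivalences of `ZMod 5`. -/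
theorem iso_GA15_of_centralizers (G : Type*) [Group G] [Fintype G]
    (hnt : ∃ x : G, x ≠ 1) (hZ : Subgroup.center G = ⊥)
    (h : ∀ x : G, x ≠ 1 →
      Nat.card (Subgroup.centralizer ({x} : Set G)) = 4 ∨
      Nat.card (Subgroup.centralizer ({x} : Set G)) = 5) :
    Nonempty (G ≃* ((ZMod 5) ≃ᵃ[ZMod 5] (ZMod 5))) := by
  obtain ⟨y, hy⟩ := hnt
  have : Nontrivial G := nontrivial_of_ne y 1 hy
  have : Fact (Nat.Prime 5) := ⟨by norm_num⟩
  have hG := card_eq_twenty h hZ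
  obtain ⟨x, hx⟩ := exists_card_centralizer_eq_four h hZ
  obtain ⟨u, hu⟩ := exists_prime_orderOf_dvd_card' 5 (by rw [hG]; norm_num)
  have hN : Nat.card (zpowers u) = 5 := by rw [Nat.card_zpowers, hu]
  have hindex : (zpowers u).index = 4 := by
    have := (zpowers u).index_mul_card
    rw [hN, hG] at this
    omega
  have : (zpowers u).Normal :=
    normal_of_isPGroup_of_index_lt (IsPGroup.of_card (hN.trans (pow_one 5).symm))
      (by rw [hindex]; norm_num)
  have hc : (zpowers u).IsComplement' (centralizer {x}) :=
    isComplement'_of_coprime (by rw [hN, hx, hG]) (by rw [hN, hx]; norm_num)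
  have hC : centralizer (zpowers u : Set G) ≤ zpowers u :=
    calc centralizer (zpowers u : Set G)
        _ ≤ centralizer {u} := centralizer_le (Set.singleton_subset_iff.mpr (mem_zpowers u))
        _ = zpowers u := centralizer_eq_zpowers_of_orderOf_eq_five h hu
  have hAut : Nat.card (MulAut (zpowers u)) ≤ Nat.card (centralizer {x}) := by
    rw [IsCyclic.card_mulAut, hN, hx]
    decide
  have e : zpowers u ≃* Multiplicative (ZMod 5) := mulEquivOfPrimeCardEq hN (Nat.card_zmod 5)
  exact ⟨(hc.mulEquivHolomorph hC hAut).trans <|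
    (SemidirectProduct.holomorphCongr e).trans (ZMod.affineEquivMulEquivHolomorph 5).symm⟩
end

section
/- Let G be a finite non-abelian group with nontrivial center (|Z(G)| ≥ 2) such that |C_G(x)| < 4 + |Z(G)| for every noncentral element x (i.e., G is strong claw-free). Then for every noncentral x in G, |C_G(x)| = 4 or |C_G(x)| = 6. -/
/-!
The center `Z` is a subgroup of `C_G(x)`, properly so when `x` is noncentral, hence
`|C_G(x)| = k |Z|` with `k ≥ 2`. The bound `|C_G(x)| < 4 + |Z|` then reads
`(k - 1) |Z| < 4`, and with `|Z| ≥ 2` this forces `k = 2` and `|Z| ∈ {2, 3}`.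
-/

theorem Subgroup.card_center_lt_card_centralizer_singleton {G : Type*} [Group G] [Finite G]
    {x : G} (hx : x ∉ center G) :
    Nat.card (center G) < Nat.card (centralizer ({x} : Set G)) := by
  by_contra! hle
  have heq := eq_of_le_of_card_ge (center_le_centralizer {x}) hle
  exact hx (heq ▸ mem_centralizer_singleton_iff.mpr rfl)

theorem eq_four_or_six_of_dvd_of_lt_of_lt_add_four {z c : ℕ} (hz : 2 ≤ z) (hdvd : z ∣ c)
    (hlt : z < c) (hc : c < 4 + z) : c = 4 ∨ c = 6 := by
  obtain ⟨k, rfl⟩ := hdvd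
  have hk : 2 ≤ k := by
    by_contra! hk
    interval_cases k <;> omega
  have hk2 : k = 2 := by nlinarith
  subst hk2
  omega

theorem centralizer_four_or_six_of_strong_claw_free_general (G : Type*) [Group G] [Fintype G]
    (hZ : 2 ≤ Nat.card (Subgroup.center G))
    (h : ∀ x : G, x ∉ Subgroup.center G →
      Nat.card (Subgroup.centralizer ({x} : Set G)) <
        4 + Nat.card (Subgroup.center G)) :
    ∀ x : G, x ∉ Subgroup.center G →
      Nat.card (Subgroup.centralizer ({x} : Set G)) = 4 ∨
      Nat.card (Subgroup.centralizer ({x} : Set G)) = 6 :=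
  fun x hx => eq_four_or_six_of_dvd_of_lt_of_lt_add_four hZ
    (Subgroup.card_dvd_of_le (Subgroup.center_le_centralizer _))
    (Subgroup.card_center_lt_card_centralizer_singleton hx) (h x hx)

/-- If a finite non-abelian group `G` has nontrivial center and is strong claw-free
(i.e. `|C_G(x)| < 4 + |Z(G)|` for every noncentral `x`), then every noncentral element
has centralizer of order `4` or `6`. -/
theorem centralizer_four_or_six_of_strong_claw_free (G : Type*) [Group G] [Fintype G]
    (hna : ¬ ∀ a b : G, a * b = b * a)
    (hZ : 2 ≤ Nat.card (Subgroup.center G))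
    (h : ∀ x : G, x ∉ Subgroup.center G →
      Nat.card (Subgroup.centralizer ({x} : Set G)) <
        4 + Nat.card (Subgroup.center G)) :
    ∀ x : G, x ∉ Subgroup.center G →
      Nat.card (Subgroup.centralizer ({x} : Set G)) = 4 ∨
      Nat.card (Subgroup.centralizer ({x} : Set G)) = 6 :=
  centralizer_four_or_six_of_strong_claw_free_general G hZ h
end

section
/- There is no finite non-abelian group G with |Z(G)| = 3 such that |C_G(x)| = 6 for every noncentral element x of G. In particular, no finite non-abelian group with center of order 3 is strong claw-free. -/
/-!
Every noncentral conjugacy class has size `m = |G| / 6`, so the class equation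
`|G| = 3 + k m` forces `m ∣ 3`. If `m = 1` the centralizer of a noncentral element is all of `G`.
If `m = 3` then `|G| = 18`; a subgroup of order `9` is abelian and is not central, so it
centralizes some noncentral element, and `9 ∣ 6`. The claw-free bound reduces to the first
statement: a noncentral centralizer properly contains `Z(G)`, so its order is a multiple of `3`
that exceeds `3` and is below `7`.
-/

open Subgroup

theorem ConjClasses.nat_card_carrier_mk {G : Type*} [Group G] (g : G) :
    Nat.card (ConjClasses.mk g).carrier = (centralizer {g}).index := by
  rw [← ConjAct.orbit_eq_carrier_conjClasses, Nat.card_coe_set_eq, ← MulAction.index_stabilizer,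
    centralizer_eq_comap_stabilizer]
  exact (index_comap_of_surjective _ (MulEquiv.surjective _)).symm

namespace Subgroup

variable {G : Type*} [Group G]

theorem card_center_lt_card_centralizer [Finite G] {g : G} (hg : g ∉ center G) :
    Nat.card (center G) < Nat.card (centralizer {g}) := by
  have hle := center_le_centralizer ({g} : Set G)
  refine (card_le_of_le hle).lt_of_ne fun hcard => hg ?_
  rw [eq_of_le_of_card_ge hle hcard.ge]
  exact mem_centralizer_singleton_iff.mpr rfl

theorem dvd_card_sub_card_center_of_index_centralizer_eq [Finite G] {m : ℕ}
    (h : ∀ g : G, g ∉ center G → (centralizer {g}).index = m) :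
    m ∣ Nat.card G - Nat.card (center G) := by
  rw [← Group.nat_card_center_add_sum_card_noncenter_eq_card G, Nat.add_sub_cancel_left]
  refine finsum_mem_induction (m ∣ ·) (dvd_zero m) (fun _ _ => dvd_add) ?_
  intro x hx
  obtain ⟨g, rfl⟩ := ConjClasses.mk_surjective x
  have hg : g ∉ center G := fun hg => (ConjClasses.mk_bijOn G).mapsTo hg hx
  rw [ConjClasses.nat_card_carrier_mk, h g hg]

theorem exists_notMem_center_sq_dvd_card_centralizer [Finite G] {p : ℕ} [Fact p.Prime]
    (hG : p ^ 2 ∣ Nat.card G) (hZ : ¬ p ^ 2 ∣ Nat.card (center G)) :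
    ∃ g ∉ center G, p ^ 2 ∣ Nat.card (centralizer {g}) := by
  obtain ⟨P, hP⟩ := Sylow.exists_subgroup_card_pow_prime p hG
  have : IsMulCommutative P := IsPGroup.isMulCommutative_of_card_eq_prime_sq hP
  obtain ⟨g, hgP, hg⟩ := SetLike.not_le_iff_exists.mp fun hle => hZ (hP ▸ card_dvd_of_le hle)
  have hPC : P ≤ centralizer {g} :=
    (le_centralizer P).trans (centralizer_le (Set.singleton_subset_iff.mpr hgP))
  exact ⟨g, hg, hP ▸ card_dvd_of_le hPC⟩

end Subgroup

theorem not_forall_card_centralizer_eq_six {G : Type*} [Group G] [Finite G] {a : G}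
    (ha : a ∉ center G) (hZ : Nat.card (center G) = 3) :
    ¬ ∀ x : G, x ∉ center G → Nat.card (centralizer {x}) = 6 := by
  intro hC
  set m := (centralizer {a}).index
  have hcard : 6 * m = Nat.card G := hC a ha ▸ card_mul_index _
  have hindex : ∀ g : G, g ∉ center G → (centralizer {g}).index = m := by
    intro g hg
    have := card_mul_index (centralizer {g})
    rw [hC g hg] at this
    omega
  have hm3 : m ∣ 3 := by
    have hsub := dvd_card_sub_card_center_of_index_centralizer_eq hindex
    rw [hZ, ← hcard] at hsub
    have hm0 : 0 < m := by have := Nat.card_pos (α := G); omega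
    simpa [show 6 * m - (6 * m - 3) = 3 by omega] using Nat.dvd_sub (dvd_mul_left m 6) hsub
  rcases (Nat.dvd_prime Nat.prime_three).mp hm3 with hm | hm
  · exact ha (centralizer_eq_top_iff_subset.mp (index_eq_one.mp hm) rfl)
  · have : Fact (Nat.Prime 3) := ⟨Nat.prime_three⟩
    obtain ⟨g, hg, h9⟩ := exists_notMem_center_sq_dvd_card_centralizer (G := G) (p := 3)
      (by rw [← hcard, hm]; norm_num) (by rw [hZ]; norm_num)
    rw [hC g hg] at h9
    norm_num at h9

/-- There is no finite non-abelian group `G` with `|Z(G)| = 3` in which every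
noncentral element has centralizer of order `6`.  In particular, no finite non-abelian
group with center of order `3` is strong claw-free. -/
theorem no_group_center_three_claw_free :
    (∀ (G : Type) [Group G] [Fintype G], (¬ ∀ a b : G, a * b = b * a) →
      Nat.card (Subgroup.center G) = 3 →
      ¬ (∀ x : G, x ∉ Subgroup.center G →
        Nat.card (Subgroup.centralizer ({x} : Set G)) = 6)) ∧
    (∀ (G : Type) [Group G] [Fintype G], (¬ ∀ a b : G, a * b = b * a) →
      Nat.card (Subgroup.center G) = 3 →
      ¬ (∀ x : G, x ∉ Subgroup.center G →
        Nat.card (Subgroup.centralizer ({x} : Set G)) <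
          4 + Nat.card (Subgroup.center G))) := by
  have noncentral {G : Type} [Group G] (h : ¬ ∀ a b : G, a * b = b * a) : ∃ a, a ∉ center G := by
    contrapose! h
    exact fun a b => (mem_center_iff.mp (h a) b).symm
  refine ⟨fun G _ _ hna hZ => ?_, fun G _ _ hna hZ hlt => ?_⟩
  · obtain ⟨a, ha⟩ := noncentral hna
    exact not_forall_card_centralizer_eq_six ha hZ
  · obtain ⟨a, ha⟩ := noncentral hna
    refine not_forall_card_centralizer_eq_six ha hZ fun x hx => ?_
    have hdvd : 3 ∣ Nat.card (centralizer {x}) :=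
      hZ ▸ card_dvd_of_le (center_le_centralizer _)
    have hgt := card_center_lt_card_centralizer hx
    have hlt7 := hlt x hx
    omega
end

section
/- Let G be a finite non-abelian group with |Z(G)| = 2 such that |C_G(x)| < 4 + |Z(G)| for every noncentral element x (i.e., G is strong claw-free). Then G is isomorphic to Q_8 or to D_8. -/
/-!
For noncentral `x`, `|C_G(x)|` is a multiple of `|Z(G)| = 2` strictly between `2` and `6`, so
`Z(G)` has index two in `C_G(x)`; hence every square, and therefore every commutator, is
central. Then `y ↦ ⁅x, y⁆` is a homomorphism `G → Z(G)` with kernel `C_G(x)`, so `|G| = 8`.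
An element `a` with `a² ≠ 1` has order four and `a²` generates `Z(G)`; any `b` not commuting
with `a` has `⁅a, b⁆ = a²`, i.e. `b a b⁻¹ = a⁻¹`, and `b² ∈ {1, a²}`: the presentations of
`D₈` and `Q₈`.
-/

open Subgroup
open scoped commutatorElement

section Presentation

variable {G : Type*} [Group G] {a b : G} {n : ℕ}

theorem zpow_eq_zpow_of_intCast_eq (ha : a ^ n = 1) {m k : ℤ} (h : (m : ZMod n) = k) :
    a ^ m = a ^ k :=
  zpow_eq_zpow_iff_modEq.mpr <| ((ZMod.intCast_eq_intCast_iff m k n).mp h).of_dvd <|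
    Int.natCast_dvd_natCast.mpr (orderOf_dvd_of_pow_eq_one ha)

theorem zpow_cast_eq_one_iff (ha : orderOf a = n) (i : ZMod n) :
    a ^ (i.cast : ℤ) = 1 ↔ i = 0 := by
  rw [← orderOf_dvd_iff_zpow_eq_one, ha, ← ZMod.intCast_zmod_eq_zero_iff_dvd,
    ZMod.intCast_zmod_cast]

theorem mul_zpow_ne_one (hb : b ∉ zpowers a) (k : ℤ) : b * a ^ k ≠ 1 := fun h =>
  hb ⟨-k, by simp only [zpow_neg, ← eq_inv_of_mul_eq_one_left h]⟩

theorem zpow_mul_eq_mul_zpow_neg (hconj : b * a * b⁻¹ = a⁻¹) (m : ℤ) :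
    a ^ m * b = b * a ^ (-m) := by
  have h := conj_zpow (a := b) (b := a) (i := -m)
  rw [hconj, inv_zpow', neg_neg] at h
  exact eq_mul_inv_iff_mul_eq.mp h

def DihedralGroup.lift_s14 (ha : a ^ n = 1) (hb : b * b = 1) (hconj : b * a * b⁻¹ = a⁻¹) :
    DihedralGroup n →* G :=
  MonoidHom.mk' (fun | .r i => a ^ (i.cast : ℤ) | .sr i => b * a ^ (i.cast : ℤ)) <| by
    have key {m k : ℤ} (h : (m : ZMod n) = k) := zpow_eq_zpow_of_intCast_eq ha h
    rintro (i | i) (j | j) <;>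
      simp only [DihedralGroup.r_mul_r, DihedralGroup.r_mul_sr, DihedralGroup.sr_mul_r,
        DihedralGroup.sr_mul_sr]
    · rw [← zpow_add]
      exact key (by push_cast [ZMod.intCast_zmod_cast]; ring)
    · rw [← mul_assoc, zpow_mul_eq_mul_zpow_neg hconj, mul_assoc, ← zpow_add]
      exact congrArg _ (key (by push_cast [ZMod.intCast_zmod_cast]; ring))
    · rw [mul_assoc, ← zpow_add]
      exact congrArg _ (key (by push_cast [ZMod.intCast_zmod_cast]; ring))
    · rw [mul_assoc, ← mul_assoc _ b, zpow_mul_eq_mul_zpow_neg hconj, mul_assoc, ← mul_assoc b,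
        hb, one_mul, ← zpow_add]
      exact key (by push_cast [ZMod.intCast_zmod_cast]; ring)

def QuaternionGroup.lift_s14 (ha : a ^ (2 * n) = 1) (hb : b * b = a ^ n)
    (hconj : b * a * b⁻¹ = a⁻¹) : QuaternionGroup n →* G :=
  MonoidHom.mk' (fun | .a i => a ^ (i.cast : ℤ) | .xa i => b * a ^ (i.cast : ℤ)) <| by
    have key {m k : ℤ} (h : (m : ZMod (2 * n)) = k) := zpow_eq_zpow_of_intCast_eq ha h
    rintro (i | i) (j | j) <;>
      simp only [QuaternionGroup.a_mul_a, QuaternionGroup.a_mul_xa, QuaternionGroup.xa_mul_a,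
        QuaternionGroup.xa_mul_xa]
    · rw [← zpow_add]
      exact key (by push_cast [ZMod.intCast_zmod_cast]; ring)
    · rw [← mul_assoc, zpow_mul_eq_mul_zpow_neg hconj, mul_assoc, ← zpow_add]
      exact congrArg _ (key (by push_cast [ZMod.intCast_zmod_cast]; ring))
    · rw [mul_assoc, ← zpow_add]
      exact congrArg _ (key (by push_cast [ZMod.intCast_zmod_cast]; ring))
    · rw [mul_assoc, ← mul_assoc _ b, zpow_mul_eq_mul_zpow_neg hconj, mul_assoc, ← mul_assoc b,
        hb, ← zpow_natCast, ← zpow_add, ← zpow_add]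
      exact key (by push_cast [ZMod.intCast_zmod_cast]; ring)

theorem DihedralGroup.nonempty_mulEquiv [Finite G] (ha : orderOf a = n) (hb : b * b = 1)
    (hconj : b * a * b⁻¹ = a⁻¹) (hba : b ∉ zpowers a) (hcard : Nat.card G = 2 * n) :
    Nonempty (G ≃* DihedralGroup n) := by
  let f := DihedralGroup.lift_s14 (ha ▸ pow_orderOf_eq_one a) hb hconj
  have hf : Function.Injective f := by
    refine (injective_iff_map_eq_one f).mpr ?_
    rintro (i | i) hi
    · rw [(zpow_cast_eq_one_iff ha i).mp hi, DihedralGroup.r_zero]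
    · exact absurd hi (mul_zpow_ne_one hba _)
  exact ⟨(MulEquiv.ofBijective f
    (hf.bijective_of_nat_card_le (by rw [hcard, DihedralGroup.nat_card]))).symm⟩

theorem QuaternionGroup.nonempty_mulEquiv [Finite G] [NeZero n] (ha : orderOf a = 2 * n)
    (hb : b * b = a ^ n) (hconj : b * a * b⁻¹ = a⁻¹) (hba : b ∉ zpowers a)
    (hcard : Nat.card G = 4 * n) : Nonempty (G ≃* QuaternionGroup n) := by
  let f := QuaternionGroup.lift_s14 (ha ▸ pow_orderOf_eq_one a) hb hconj
  have hf : Function.Injective f := by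
    refine (injective_iff_map_eq_one f).mpr ?_
    rintro (i | i) hi
    · rw [(zpow_cast_eq_one_iff ha i).mp hi, QuaternionGroup.a_zero]
    · exact absurd hi (mul_zpow_ne_one hba _)
  exact ⟨(MulEquiv.ofBijective f (hf.bijective_of_nat_card_le
    (by rw [hcard, Nat.card_eq_fintype_card, QuaternionGroup.card]))).symm⟩

end Presentation

section Center

variable {G : Type*} [Group G]

theorem Subgroup.mul_self_mem_of_card_eq_two_mul [Finite G] {H K : Subgroup G} (hHK : H ≤ K)
    (hcard : Nat.card K = 2 * Nat.card H) {g : G} (hg : g ∈ K) : g * g ∈ H := by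
  have hrel : H.relIndex K = 2 := by
    have h := relIndex_mul_relIndex ⊥ H K bot_le hHK
    rw [relIndex_bot_left, relIndex_bot_left, hcard, mul_comm 2] at h
    exact Nat.eq_of_mul_eq_mul_left Nat.card_pos h
  exact mul_self_mem_of_index_two hrel ⟨g, hg⟩

theorem Subgroup.eq_one_or_eq_of_card_eq_two {H : Subgroup G} (hH : Nat.card H = 2) {u v : G}
    (hu : u ∈ H) (hv : v ∈ H) (hv1 : v ≠ 1) : u = 1 ∨ u = v := by
  obtain ⟨w, -, hw⟩ := (Nat.card_eq_two_iff' (1 : H)).mp hH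
  by_cases hu1 : u = 1
  · exact .inl hu1
  · refine .inr (congrArg Subtype.val ((hw ⟨u, hu⟩ ?_).trans (hw ⟨v, hv⟩ ?_).symm)) <;>
      simpa [Subtype.ext_iff]

theorem commutatorElement_mem_of_forall_mul_self_mem {H : Subgroup G} (h : ∀ g, g * g ∈ H)
    (x y : G) : ⁅x, y⁆ ∈ H := by
  have hid : ⁅x, y⁆ = (x⁻¹ * x⁻¹)⁻¹ * ((x⁻¹ * y) * (x⁻¹ * y)) * (y⁻¹ * y⁻¹) := by
    rw [commutatorElement_def]; group
  rw [hid]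
  exact mul_mem (mul_mem (inv_mem (h _)) (h _)) (h _)

theorem index_centralizer_dvd_card_center [Finite G] {x : G} (h : ∀ y, ⁅x, y⁆ ∈ center G) :
    (centralizer {x}).index ∣ Nat.card (center G) := by
  let φ : G →* center G := MonoidHom.mk' (fun y => ⟨⁅x, y⁆, h y⟩) fun y w => by
    ext
    change ⁅x, y * w⁆ = ⁅x, y⁆ * ⁅x, w⁆
    rw [commutatorElement_mul_right_eq_mul_conj, mul_assoc _ y, mem_center_iff.mp (h w) y,
      ← mul_assoc, mul_inv_cancel_right]
  have hker : φ.ker = centralizer {x} := by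
    ext y
    rw [MonoidHom.mem_ker, mem_centralizer_singleton_iff, eq_comm (a := y * x),
      ← commutatorElement_eq_one_iff_mul_comm]
    exact Subtype.ext_iff
  rw [← hker, index_ker]
  exact card_subgroup_dvd_card _

theorem card_centralizer_eq_two_mul_card_center [Finite G] {x : G} (hx : x ∉ center G)
    (hlt : Nat.card (centralizer {x}) < 3 * Nat.card (center G)) :
    Nat.card (centralizer {x}) = 2 * Nat.card (center G) := by
  have hle : center G ≤ centralizer {x} := center_le_centralizer {x}
  have hne : center G ≠ centralizer {x} := fun h =>
    hx (h ▸ mem_centralizer_singleton_iff.mpr rfl)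
  obtain ⟨k, hk⟩ := card_dvd_of_le hle
  have hk1 : k ≠ 1 := fun h1 => hne (eq_of_le_of_card_ge hle (by rw [hk, h1, mul_one]))
  have hk3 : k < 3 := by
    rw [hk, mul_comm] at hlt
    exact Nat.lt_of_mul_lt_mul_right hlt
  have hk0 : k ≠ 0 := by rintro rfl; exact Nat.card_pos.ne' (hk.trans (mul_zero _))
  obtain rfl : k = 2 := by omega
  rw [hk, mul_comm]

theorem mul_self_mem_center [Finite G]
    (hC : ∀ x ∉ center G, Nat.card (centralizer {x}) = 2 * Nat.card (center G)) (g : G) :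
    g * g ∈ center G := by
  by_cases hg : g ∈ center G
  · exact mul_mem hg hg
  · exact mul_self_mem_of_card_eq_two_mul (center_le_centralizer {g}) (hC g hg)
      (mem_centralizer_singleton_iff.mpr rfl)

theorem card_eq_two_mul_card_centralizer [Finite G] (hZ : Nat.card (center G) = 2)
    (hsq : ∀ g : G, g * g ∈ center G) {x : G} (hx : x ∉ center G) :
    Nat.card G = 2 * Nat.card (centralizer {x}) := by
  have hdvd := index_centralizer_dvd_card_center fun y =>
    commutatorElement_mem_of_forall_mul_self_mem hsq x y
  have hne : (centralizer {x}).index ≠ 1 := by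
    rwa [Ne, index_eq_one, centralizer_eq_top_iff_subset, Set.singleton_subset_iff]
  rw [hZ] at hdvd
  have hindex : (centralizer {x}).index = 2 :=
    ((Nat.dvd_prime Nat.prime_two).mp hdvd).resolve_left hne
  rw [← card_mul_index (centralizer {x}), hindex, mul_comm]

theorem orderOf_eq_four_of_mul_self_ne_one (hZ : Nat.card (center G) = 2)
    (hsq : ∀ g : G, g * g ∈ center G) {a : G} (ha : a * a ≠ 1) : orderOf a = 4 := by
  have ha4 : a * a * (a * a) = 1 :=
    (eq_one_or_eq_of_card_eq_two hZ (hsq (a * a)) (hsq a) ha).resolve_right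
      fun h => ha (mul_eq_left.mp h)
  exact orderOf_eq_prime_pow (p := 2) (n := 1) (by rwa [pow_one, sq])
    (by rwa [show 2 ^ (1 + 1) = 2 + 2 from rfl, pow_add, sq])

theorem exists_conj_eq_inv_of_mul_self_ne_one (hZ : Nat.card (center G) = 2)
    (hsq : ∀ g : G, g * g ∈ center G) {a : G} (ha : a * a ≠ 1) :
    ∃ b : G, b ∉ zpowers a ∧ b * a * b⁻¹ = a⁻¹ ∧ (b * b = 1 ∨ b * b = a * a) := by
  have haZ : a ∉ center G := fun h => by
    have h1 : a = 1 := (eq_one_or_eq_of_card_eq_two hZ h (hsq a) ha).elim id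
      fun h1 => mul_eq_left.mp h1.symm
    exact ha (by rw [h1, one_mul])
  obtain ⟨b, hab⟩ : ∃ b : G, b * a ≠ a * b := by
    by_contra! hall
    exact haZ (mem_center_iff.mpr hall)
  have hcomm : ⁅a, b⁆ = a * a :=
    (eq_one_or_eq_of_card_eq_two hZ (commutatorElement_mem_of_forall_mul_self_mem hsq a b)
      (hsq a) ha).resolve_left
      fun h => hab (commutatorElement_eq_one_iff_mul_comm.mp h).symm
  refine ⟨b, ?_, ?_, eq_one_or_eq_of_card_eq_two hZ (hsq b) (hsq a) ha⟩
  · rintro ⟨k, rfl⟩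
    exact hab ((Commute.refl a).zpow_left k).eq
  · have h : b * a⁻¹ * b⁻¹ = a := by
      rw [commutatorElement_def] at hcomm
      simpa [mul_assoc] using hcomm
    calc b * a * b⁻¹ = (b * a⁻¹ * b⁻¹)⁻¹ := by group
      _ = a⁻¹ := by rw [h]

end Center

/-- A finite non-abelian group with center of order `2` that is strong claw-free
(i.e. `|C_G(x)| < 4 + |Z(G)|` for every noncentral `x`) is isomorphic to `Q₈` or `D₈`. -/
theorem iso_Q8_or_D8_of_strong_claw_free (G : Type*) [Group G] [Fintype G]
    (hna : ¬ ∀ a b : G, a * b = b * a)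
    (hZ : Nat.card (Subgroup.center G) = 2)
    (h : ∀ x : G, x ∉ Subgroup.center G →
      Nat.card (Subgroup.centralizer ({x} : Set G)) <
        4 + Nat.card (Subgroup.center G)) :
    Nonempty (G ≃* QuaternionGroup 2) ∨ Nonempty (G ≃* DihedralGroup 4) := by
  have hC : ∀ x ∉ center G, Nat.card (centralizer {x}) = 2 * Nat.card (center G) :=
    fun x hx => card_centralizer_eq_two_mul_card_center hx (by have := h x hx; omega)
  have hsq : ∀ g : G, g * g ∈ center G := mul_self_mem_center hC
  obtain ⟨x, hx⟩ : ∃ x : G, x ∉ center G := by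
    by_contra! hall
    exact hna fun u v => mem_center_iff.mp (hall v) u
  have hcard : Nat.card G = 8 := by
    rw [card_eq_two_mul_card_centralizer hZ hsq hx, hC x hx, hZ]
  obtain ⟨a, ha⟩ : ∃ a : G, a * a ≠ 1 := by
    by_contra! h1
    exact hna fun u v => Commute.of_orderOf_dvd_two
      (fun g => orderOf_dvd_of_pow_eq_one (by rw [sq, h1])) u v
  have ha4 := orderOf_eq_four_of_mul_self_ne_one hZ hsq ha
  obtain ⟨b, hba, hconj, hbb | hbb⟩ := exists_conj_eq_inv_of_mul_self_ne_one hZ hsq ha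
  · exact .inr (DihedralGroup.nonempty_mulEquiv ha4 hbb hconj hba hcard)
  · exact .inl (QuaternionGroup.nonempty_mulEquiv ha4 (by rw [hbb, sq]) hconj hba hcard)
end

section
/- Let n be an odd natural number with n ≥ 3 and let G = D_{2n} be the dihedral group of order 2n. Then for every natural number k, G is strong k-star free (i.e., |C_G(x)| < (k+1) + |Z(G)| for all noncentral x in G) if and only if k ≥ n - 1. Equivalently, the strong star number of D_{2n} is S(D_{2n}) = n - 1. -/
/-!
For odd `n` the center of `D_{2n}` is trivial, every nontrivial rotation has the rotation
subgroup (of order `n`) as its centralizer, and every reflection `s` has centralizer `{1, s}`,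
since `2` is invertible in `ZMod n`. So the largest centralizer of a noncentral element has
order `n`, and the strong star condition `n < (k + 1) + 1` means exactly `n - 1 ≤ k`.
-/

open Subgroup

def IsStrongStarFree (G : Type*) [Group G] (k : ℕ) : Prop :=
  ∀ x : G, x ∉ center G → Nat.card (centralizer ({x} : Set G)) < (k + 1) + Nat.card (center G)

namespace DihedralGroup

variable {n : ℕ}

theorem centralizer_r_eq_zpowers {i : ZMod n} (hi : i + i ≠ 0) :
    centralizer ({r i} : Set (DihedralGroup n)) = zpowers (r 1) := by
  refine le_antisymm (fun x hx => ?_) (zpowers_le.mpr ?_)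
  · rw [mem_centralizer_singleton_iff] at hx
    cases x with
    | r j => exact mem_zpowers_iff.mpr ⟨ZMod.cast j, by rw [r_one_zpow, ZMod.intCast_zmod_cast]⟩
    | sr j =>
      simp only [sr_mul_r, r_mul_sr, sr.injEq] at hx
      exact absurd (by linear_combination hx) hi
  · rw [mem_centralizer_singleton_iff, r_mul_r, r_mul_r, add_comm]

theorem centralizer_sr_eq_zpowers (hodd : Odd n) (i : ZMod n) :
    centralizer ({sr i} : Set (DihedralGroup n)) = zpowers (sr i) := by
  refine le_antisymm (fun x hx => ?_) (zpowers_le.mpr (mem_centralizer_singleton_iff.mpr rfl))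
  rw [mem_centralizer_singleton_iff] at hx
  cases x with
  | r j =>
    simp only [r_mul_sr, sr_mul_r, sr.injEq] at hx
    have hj : j = 0 := (ZMod.add_self_eq_zero_iff_eq_zero hodd).mp (by linear_combination -hx)
    rw [hj, r_zero]
    exact one_mem _
  | sr j =>
    simp only [sr_mul_sr, r.injEq] at hx
    have hj : j - i = 0 := (ZMod.add_self_eq_zero_iff_eq_zero hodd).mp (by linear_combination -hx)
    rw [sub_eq_zero.mp hj]
    exact mem_zpowers _

theorem card_centralizer_r {i : ZMod n} (hi : i + i ≠ 0) :
    Nat.card (centralizer ({r i} : Set (DihedralGroup n))) = n := by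
  rw [centralizer_r_eq_zpowers hi, Nat.card_zpowers, orderOf_r_one]

theorem card_centralizer_sr (hodd : Odd n) (i : ZMod n) :
    Nat.card (centralizer ({sr i} : Set (DihedralGroup n))) = 2 := by
  rw [centralizer_sr_eq_zpowers hodd i, Nat.card_zpowers, orderOf_sr]

theorem isStrongStarFree_iff_of_odd (hodd : Odd n) (hn : n ≠ 1) (k : ℕ) :
    IsStrongStarFree (DihedralGroup n) k ↔ n - 1 ≤ k := by
  have : Nontrivial (ZMod n) := ZMod.nontrivial_iff.mpr hn
  have add_self_ne_zero : ∀ {i : ZMod n}, i ≠ 0 → i + i ≠ 0 :=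
    fun hi => (ZMod.add_self_eq_zero_iff_eq_zero hodd).not.mpr hi
  rw [IsStrongStarFree, center_eq_bot_of_odd_ne_one hodd hn, card_bot]
  simp only [mem_bot]
  constructor
  · intro h
    have hr : (r 1 : DihedralGroup n) ≠ 1 := fun hr1 => one_ne_zero (r.inj hr1)
    have hcard := h (r 1) hr
    rw [card_centralizer_r (add_self_ne_zero one_ne_zero)] at hcard
    omega
  · rintro hk (i | i) hx
    · have hi : i ≠ 0 := by rintro rfl; exact hx r_zero
      rw [card_centralizer_r (add_self_ne_zero hi)]
      omega
    · have hpos := hodd.pos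
      rw [card_centralizer_sr hodd]
      omega

end DihedralGroup

/-- For odd `n ≥ 3`, the dihedral group `D_{2n}` is strong `k`-star free
(i.e. `|C_G(x)| < (k+1) + |Z(G)|` for all noncentral `x`) iff `k ≥ n - 1`;
equivalently, its strong star number is `n - 1`. -/
theorem dihedral_odd_strong_star_free (n : ℕ) (hn : 3 ≤ n) (hodd : Odd n) :
    (∀ k : ℕ,
      (∀ x : DihedralGroup n, x ∉ Subgroup.center (DihedralGroup n) →
        Nat.card (Subgroup.centralizer ({x} : Set (DihedralGroup n))) <
          (k + 1) + Nat.card (Subgroup.center (DihedralGroup n))) ↔ n - 1 ≤ k) ∧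
    sInf {k : ℕ | ∀ x : DihedralGroup n, x ∉ Subgroup.center (DihedralGroup n) →
        Nat.card (Subgroup.centralizer ({x} : Set (DihedralGroup n))) <
          (k + 1) + Nat.card (Subgroup.center (DihedralGroup n))} = n - 1 := by
  have key : ∀ k, IsStrongStarFree (DihedralGroup n) k ↔ n - 1 ≤ k :=
    DihedralGroup.isStrongStarFree_iff_of_odd hodd (by omega)
  have hset : {k | IsStrongStarFree (DihedralGroup n) k} = Set.Ici (n - 1) := Set.ext key
  exact ⟨key, (congrArg sInf hset).trans csInf_Ici⟩
end
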